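/- Bayesian networks embed into CP-logic: Let B be a Bayesian network and ⟨T, I, N⟩ a B-process. Then the probabilistic process ⟨T, I⟩, together with the map E sending each non-leaf node s of T to the CP-law of CP_B determined by the node N(s) and the assignment w giving each parent p of N(s) the unique value w(p) with (p, w(p)) ∈ I(s), is an execution model of the CP-theory CP_B. -/

import Mathlib

noncomputable section
open scoped Classical

namespace CP

/-- The three truth values. -/
inductive TV where
  | f | u | t
deriving DecidableEq

namespace TV

/-- Rank of a truth value in the truth order `f ≤_t u ≤_t t`. -/
def rank : TV → ℕ
  | f => 0
  | u => 1
  | t => 2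

/-- Minimum in the truth order. -/
def tmin (a b : TV) : TV := if rank a ≤ rank b then a else b

/-- Maximum in the truth order. -/
def tmax (a b : TV) : TV := if rank a ≤ rank b then b else a

/-- Kleene negation. -/
def tneg : TV → TV
  | f => t
  | u => u
  | t => f

/-- The precision order on truth values: `u ≤_p f` and `u ≤_p t` (and reflexivity). -/
def lep (a b : TV) : Prop := a = u ∨ a = b

end TV

/-- Pointwise precision order on three-valued interpretations. -/
def leP {A : Type} (ν ν' : A → TV) : Prop := ∀ a, TV.lep (ν a) (ν' a)

/-- Propositional formulas over a type `A` of atoms (including the constant `tru`,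
the empty conjunction, used as the body of CP-laws for parentless nodes). -/
inductive Form (A : Type) where
  | tru  : Form A
  | atom : A → Form A
  | conj : Form A → Form A → Form A
  | disj : Form A → Form A → Form A
  | neg  : Form A → Form A

namespace Form

variable {A : Type}

/-- Two-valued satisfaction of a formula in an interpretation (a set of atoms). -/
def sat (I : Set A) : Form A → Prop
  | .tru => True
  | .atom a => a ∈ I
  | .conj φ ψ => sat I φ ∧ sat I ψ
  | .disj φ ψ => sat I φ ∨ sat I ψ
  | .neg φ => ¬ sat I φ

/-- Kleene three-valued valuation of a formula. -/
def val (ν : A → TV) : Form A → TV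
  | .tru => TV.t
  | .atom a => ν a
  | .conj φ ψ => TV.tmin (val ν φ) (val ν ψ)
  | .disj φ ψ => TV.tmax (val ν φ) (val ν ψ)
  | .neg φ => TV.tneg (val ν φ)

end Form

/-- A CP-law: a nonempty head list of distinct atoms with probabilities in `(0,1]`
summing to at most `1`, together with a body formula. -/
structure CPLaw (A : Type) where
  head : List (A × ℝ)
  body : Form A
  head_ne : head ≠ []
  head_nodup : (head.map Prod.fst).Nodup
  head_pos : ∀ p ∈ head, 0 < p.2 ∧ p.2 ≤ 1
  head_sum : (head.map Prod.snd).sum ≤ 1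

namespace CPLaw

variable {A : Type}

/-- `head_At(r)`: the set of atoms occurring in the head of `r`. -/
def headAt (r : CPLaw A) : Set A := {a | a ∈ r.head.map Prod.fst}

/-- The sum `Σᵢ αᵢ` of the probabilities in the head of `r`. -/
def psum (r : CPLaw A) : ℝ := (r.head.map Prod.snd).sum

end CPLaw

/-- A probabilistic process: a finite rooted tree (given by a parent function with a
depth function ensuring well-foundedness), with an interpretation, an edge probability
and a path probability attached to each node, together with (for use in execution
models) a CP-law index `rule` attached to each node and, for each non-root node, the
`choice` in the head of the rule fired at its parent that it corresponds to
(`none` is the extra child carrying the leftover probability `1 - Σᵢ αᵢ`). -/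
structure Proc (A R : Type) where
  Node : Type
  [fintypeNode : Fintype Node]
  root : Node
  parent : Node → Node
  depth : Node → ℕ
  interp : Node → Set A
  prob : Node → ℝ
  pathProb : Node → ℝ
  rule : Node → R
  choice : Node → Option ℕ
  depth_root : depth root = 0
  depth_parent : ∀ s, s ≠ root → depth s = depth (parent s) + 1
  pathProb_root : pathProb root = 1
  pathProb_parent : ∀ s, s ≠ root → pathProb s = pathProb (parent s) * prob s

attribute [instance] Proc.fintypeNode

namespace Proc

variable {A R : Type} (W : Proc A R)

/-- `s'` is a child of `s`. -/
def isChild (s' s : W.Node) : Prop := s' ≠ W.root ∧ W.parent s' = s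

/-- `s` is a leaf. -/
def isLeaf (s : W.Node) : Prop := ∀ s', ¬ W.isChild s' s

/-- `strictAnc a b`: `a` is a strict ancestor of `b`. -/
def strictAnc (a b : W.Node) : Prop :=
  Relation.TransGen (fun y x => W.isChild y x) b a

end Proc

variable {A R : Type}

/-- `R_E(s)`: the CP-laws that have not fired at any strict ancestor of `s`. -/
def RE (W : Proc A R) (s : W.Node) : Set R :=
  {r | ∀ s', W.strictAnc s' s → W.rule s' ≠ r}

/-- The CP-law `E(s)` fires at the non-leaf node `s`: `s` has exactly one child for
each head element `(Aᵢ, αᵢ)` (with interpretation `I(s) ∪ {Aᵢ}` and edge probability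
`αᵢ`), plus exactly one extra child with unchanged interpretation and edge probability
`1 - Σᵢ αᵢ` in case `Σᵢ αᵢ < 1`. -/
def FiresAt (C : R → CPLaw A) (W : Proc A R) (s : W.Node) : Prop :=
  (∀ s', W.isChild s' s →
     (∀ i, W.choice s' = some i →
        ∃ h : i < (C (W.rule s)).head.length,
          W.interp s' = insert ((C (W.rule s)).head.get ⟨i, h⟩).1 (W.interp s) ∧
          W.prob s' = ((C (W.rule s)).head.get ⟨i, h⟩).2) ∧
     (W.choice s' = none →
        (C (W.rule s)).psum < 1 ∧ W.interp s' = W.interp s ∧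
          W.prob s' = 1 - (C (W.rule s)).psum)) ∧
  (∀ s₁ s₂, W.isChild s₁ s → W.isChild s₂ s → W.choice s₁ = W.choice s₂ → s₁ = s₂) ∧
  (∀ i, i < (C (W.rule s)).head.length → ∃ s', W.isChild s' s ∧ W.choice s' = some i) ∧
  ((C (W.rule s)).psum < 1 → ∃ s', W.isChild s' s ∧ W.choice s' = none)

/-- `⟨W, I, E⟩` is a weak execution model of the CP-theory `C`. -/
def IsWEM (C : R → CPLaw A) (W : Proc A R) : Prop :=
  W.interp W.root = (∅ : Set A) ∧
  (∀ s, s ≠ W.root → 0 ≤ W.prob s ∧ W.prob s ≤ 1) ∧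
  (∀ s, ¬ W.isLeaf s →
    (∑ s' ∈ Finset.univ.filter (fun s' => W.isChild s' s), W.prob s') = 1) ∧
  (∀ s, ¬ W.isLeaf s →
    W.rule s ∈ RE W s ∧ Form.sat (W.interp s) (C (W.rule s)).body ∧ FiresAt C W s) ∧
  (∀ l, W.isLeaf l → ∀ r ∈ RE W l, ¬ Form.sat (W.interp l) (C r).body)

/-- `ν 0, …, ν n` is a hypothetical derivation sequence at node `s`. -/
def IsHDS (C : R → CPLaw A) (W : Proc A R) (s : W.Node)
    (ν : ℕ → A → TV) (n : ℕ) : Prop :=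
  (∀ a, ν 0 a = if a ∈ W.interp s then TV.t else TV.f) ∧
  ∀ i, i < n → ∃ r ∈ RE W s,
    Form.val (ν i) (C r).body ≠ TV.f ∧
    (∀ p ∈ (C r).headAt, ν i p = TV.f → ν (i+1) p = TV.u) ∧
    (∀ p, ¬ (p ∈ (C r).headAt ∧ ν i p = TV.f) → ν (i+1) p = ν i p)

/-- The hypothetical derivation sequence `ν 0, …, ν n` at `s` is terminal. -/
def HDSTerminal (C : R → CPLaw A) (W : Proc A R) (s : W.Node)
    (ν : ℕ → A → TV) (n : ℕ) : Prop :=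
  ¬ ∃ r ∈ RE W s, Form.val (ν n) (C r).body ≠ TV.f ∧
      ∃ p ∈ (C r).headAt, ν n p = TV.f

/-- `⟨W, I, E⟩` is an execution model of `C`: a weak execution model in which, at every
non-leaf node, the body of the fired CP-law is not unknown in the potential of the
node (the common limit of all terminal hypothetical derivation sequences). -/
def IsExec (C : R → CPLaw A) (W : Proc A R) : Prop :=
  IsWEM C W ∧
  ∀ s, ¬ W.isLeaf s → ∀ ν n, IsHDS C W s ν n → HDSTerminal C W s ν n →
    Form.val (ν n) (C (W.rule s)).body ≠ TV.u

/-- `π_T`: the probability distribution on interpretations induced by a process. -/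
def piT (W : Proc A R) (J : Set A) : ℝ :=
  ∑ l ∈ Finset.univ.filter (fun l => W.isLeaf l ∧ W.interp l = J), W.pathProb l

/-- A Bayesian network: a finite DAG with, for each node, a finite nonempty domain and
a conditional probability table. -/
structure BN where
  N : Type
  [fintypeN : Fintype N]
  [deqN : DecidableEq N]
  parents : N → Finset N
  acyclic : ∀ n, ¬ Relation.TransGen (fun a b => a ∈ parents b) n n
  dom : N → Type
  [fintypeDom : ∀ n, Fintype (dom n)]
  [deqDom : ∀ n, DecidableEq (dom n)]
  [neDom : ∀ n, Nonempty (dom n)]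
  cpt : (n : N) → ((p : {x // x ∈ parents n}) → dom p.1) → dom n → ℝ
  cpt_nonneg : ∀ n w v, 0 ≤ cpt n w v
  cpt_sum : ∀ n w, (∑ v, cpt n w v) = 1

attribute [instance] BN.fintypeN BN.deqN BN.fintypeDom BN.deqDom BN.neDom

namespace BN

/-- The atom type `A_B = {(n,v) : n ∈ N, v ∈ dom(n)}` associated with `B`. -/
def Atom (B : BN) : Type := Σ n : B.N, B.dom n

/-- Assignments of values to the parents of `n`. -/
def Assign (B : BN) (n : B.N) : Type := (p : {x // x ∈ B.parents n}) → B.dom p.1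

instance (B : BN) : Fintype B.Atom := by unfold Atom; infer_instance

instance (B : BN) (n : B.N) : Fintype (B.Assign n) := by unfold Assign; infer_instance

instance (B : BN) (n : B.N) : Nonempty (B.Assign n) :=
  ⟨fun _ => Classical.arbitrary _⟩

/-- Indices for the CP-laws of `CP_B`: a node together with an assignment of values to
its parents. -/
def Idx (B : BN) : Type := Σ n : B.N, B.Assign n

instance (B : BN) : Fintype B.Idx := by unfold Idx; infer_instance

/-- The body of the CP-law for node `n` and parent assignment `w`: the conjunction of
the atoms `(p, w(p))` over the parents `p` of `n` (the empty conjunction, a tautology,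
if `n` has no parents). -/
def bodyOf (B : BN) (n : B.N) (w : B.Assign n) : Form B.Atom :=
  ((B.parents n).attach.toList.map
      (fun p => Form.atom (⟨p.1, w p⟩ : B.Atom))).foldr Form.conj Form.tru

/-- The head of the CP-law for node `n` and parent assignment `w`: the list of pairs
`((n,v), CPT_n(v | w))` over all `v` with `CPT_n(v | w) > 0`. -/
def headOf (B : BN) (n : B.N) (w : B.Assign n) : List (B.Atom × ℝ) :=
  ((Finset.univ.filter (fun v : B.dom n => 0 < B.cpt n w v)).toList).map
    (fun v => ((⟨n, v⟩ : B.Atom), B.cpt n w v))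

/-- The CP-law of `CP_B` determined by a node and a parent assignment. -/
def lawOf (B : BN) : B.Idx → CPLaw B.Atom
  | ⟨n, w⟩ =>
    { head := B.headOf n w
      body := B.bodyOf n w
      head_ne := by
        intro hnil
        have hfilter : (Finset.univ.filter (fun v : B.dom n => 0 < B.cpt n w v)) = ∅ := by
          simpa [headOf, List.map_eq_nil_iff, Finset.toList_eq_nil] using hnil
        have hle : ∀ v : B.dom n, B.cpt n w v ≤ 0 := by
          intro v
          by_contra hv
          have hmem : v ∈ Finset.univ.filter (fun v : B.dom n => 0 < B.cpt n w v) := by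
            simp only [Finset.mem_filter, Finset.mem_univ, true_and]
            exact lt_of_not_ge fun hge => hv (by linarith)
          rw [hfilter] at hmem
          exact absurd hmem (Finset.notMem_empty v)
        have hzero : (∑ v, B.cpt n w v) ≤ 0 := Finset.sum_nonpos fun v _ => hle v
        have hone := B.cpt_sum n w
        linarith
      head_nodup := by
        have hmap : ((B.headOf n w).map Prod.fst) =
            (((Finset.univ.filter (fun v : B.dom n => 0 < B.cpt n w v)).toList).map
              (fun v => (⟨n, v⟩ : B.Atom))) := by
          simp [headOf, List.map_map, Function.comp] <;> rfl
        rw [hmap]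
        exact (Finset.nodup_toList _).map fun a b hab => sigma_mk_injective hab
      head_pos := by
        intro p hp
        simp only [headOf, List.mem_map, Finset.mem_toList, Finset.mem_filter,
          Finset.mem_univ, true_and] at hp
        obtain ⟨v, hv, rfl⟩ := hp
        refine ⟨hv, ?_⟩
        have hnn : ∀ u ∈ (Finset.univ : Finset (B.dom n)), 0 ≤ B.cpt n w u :=
          fun u _ => B.cpt_nonneg n w u
        have hle := Finset.single_le_sum hnn (Finset.mem_univ v)
        have hone := B.cpt_sum n w
        simp only []
        linarith
      head_sum := by
        have hmap : ((B.headOf n w).map Prod.snd) =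
            (((Finset.univ.filter (fun v : B.dom n => 0 < B.cpt n w v)).toList).map
              (fun v => B.cpt n w v)) := by
          simp [headOf, List.map_map, Function.comp]
        rw [hmap, Finset.sum_map_toList]
        have hsub : (Finset.univ.filter (fun v : B.dom n => 0 < B.cpt n w v)) ⊆
            Finset.univ := Finset.filter_subset _ _
        calc (∑ v ∈ Finset.univ.filter (fun v : B.dom n => 0 < B.cpt n w v), B.cpt n w v)
            ≤ ∑ v, B.cpt n w v :=
              Finset.sum_le_sum_of_subset_of_nonneg hsub
                (fun v _ _ => B.cpt_nonneg n w v)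
          _ = 1 := B.cpt_sum n w }

end BN

/-- A `B`-process: a probabilistic process over the atoms `A_B` together with a map
`nodemap` (from non-leaf tree nodes to network nodes) such that on every root-to-leaf
path, `nodemap` restricts to an order-preserving bijection onto the network nodes, and
the children of every non-leaf node `s` realize the conditional probability table of
`nodemap s` given the unique assignment of values to its parents recorded in
`I(s)`. -/
structure BProc (B : BN) where
  Node : Type
  [fintypeNode : Fintype Node]
  root : Node
  parent : Node → Node
  depth : Node → ℕ
  interp : Node → Set B.Atom
  prob : Node → ℝ
  pathProb : Node → ℝ
  nodemap : Node → B.N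
  depth_root : depth root = 0
  depth_parent : ∀ s, s ≠ root → depth s = depth (parent s) + 1
  pathProb_root : pathProb root = 1
  pathProb_parent : ∀ s, s ≠ root → pathProb s = pathProb (parent s) * prob s
  interp_root : interp root = ∅
  prob_mem : ∀ s, s ≠ root → 0 ≤ prob s ∧ prob s ≤ 1
  prob_sum : ∀ s, (∃ c, c ≠ root ∧ parent c = s) →
    (∑ c ∈ Finset.univ.filter (fun c => c ≠ root ∧ parent c = s), prob c) = 1
  branch_bij : ∀ l, (∀ c, ¬ (c ≠ root ∧ parent c = l)) →
    Set.BijOn nodemap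
      {s | Relation.TransGen (fun y x => y ≠ root ∧ parent y = x) l s} Set.univ
  order_pres : ∀ l, (∀ c, ¬ (c ≠ root ∧ parent c = l)) →
    ∀ s s', Relation.TransGen (fun y x => y ≠ root ∧ parent y = x) l s →
      Relation.TransGen (fun y x => y ≠ root ∧ parent y = x) l s' →
      Relation.TransGen (fun a b => a ∈ B.parents b) (nodemap s) (nodemap s') →
      Relation.TransGen (fun y x => y ≠ root ∧ parent y = x) s' s
  children_spec : ∀ s, (∃ c, c ≠ root ∧ parent c = s) →
    ∃ w : B.Assign (nodemap s),
      (∀ p : {x // x ∈ B.parents (nodemap s)},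
        (⟨p.1, w p⟩ : B.Atom) ∈ interp s) ∧
      (∀ w' : B.Assign (nodemap s),
        (∀ p, (⟨p.1, w' p⟩ : B.Atom) ∈ interp s) → w' = w) ∧
      ∃ g : {v : B.dom (nodemap s) // 0 < B.cpt (nodemap s) w v} → Node,
        Function.Injective g ∧
        (∀ v, (g v ≠ root ∧ parent (g v) = s) ∧
          interp (g v) = insert (⟨nodemap s, v.1⟩ : B.Atom) (interp s) ∧
          prob (g v) = B.cpt (nodemap s) w v.1) ∧
        (∀ c, (c ≠ root ∧ parent c = s) → ∃ v, c = g v)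

attribute [instance] BProc.fintypeNode

/-- The assignment of values to the parents of `nodemap s` recorded in `I(s)`
(the unique such assignment, for non-leaf `s`). -/
def BProc.assignAt {B : BN} (W : BProc B) (s : W.Node) : B.Assign (W.nodemap s) :=
  if h : ∃ c, c ≠ W.root ∧ W.parent c = s then (W.children_spec s h).choose
  else Classical.arbitrary _

/-!
Along every branch of a `B`-process each network node receives exactly one value. At a non-leaf
node `s` the law fired there, for `nodemap s` and the parent values recorded in `I(s)`, has a body
made of atoms of `I(s)`: it is satisfied, and since atoms true in `ν₀` are never touched by a
hypothetical derivation step, it is never unknown. It has not fired higher up because no network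
node repeats on a branch; its head matches the children of `s` once a child is labelled by the
position of the value it adds, and its probabilities sum to one. At a leaf every network node
carries a value, so the body of a law that has not fired on the branch contradicts one of the
recorded parent values.
-/

namespace Form

theorem sat_foldr_conj_atom (I : Set A) (l : List A) :
    sat I ((l.map atom).foldr conj tru) ↔ ∀ a ∈ l, a ∈ I := by
  induction l with
  | nil => simp [sat]
  | cons a l ih => simp [sat, ih]

theorem val_foldr_conj_atom_eq_t {ν : A → TV} {l : List A} (h : ∀ a ∈ l, ν a = TV.t) :
    val ν ((l.map atom).foldr conj tru) = TV.t := by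
  induction l with
  | nil => rfl
  | cons a l ih =>
    simp only [List.map_cons, List.foldr_cons, val]
    rw [h a List.mem_cons_self, ih fun x hx => h x (List.mem_cons_of_mem a hx)]
    rfl

end Form

theorem IsHDS.apply_eq_t {C : R → CPLaw A} {W : Proc A R} {s : W.Node} {ν : ℕ → A → TV}
    {n : ℕ} (hν : IsHDS C W s ν n) {a : A} (ha : a ∈ W.interp s) :
    ∀ i ≤ n, ν i a = TV.t := by
  intro i hi
  induction i with
  | zero => simp [hν.1 a, ha]
  | succ i ih =>
    have hprev := ih (by omega)
    obtain ⟨r, -, -, -, hkeep⟩ := hν.2 i (by omega)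
    rw [hkeep a fun h => by simp [hprev] at h, hprev]

namespace BN

def support (B : BN) (n : B.N) (w : B.Assign n) : Finset (B.dom n) :=
  Finset.univ.filter fun v => 0 < B.cpt n w v

variable {B : BN}

theorem bodyOf_eq (n : B.N) (w : B.Assign n) :
    B.bodyOf n w = ((((B.parents n).attach.toList.map
      fun p => (⟨p.1, w p⟩ : B.Atom)).map Form.atom).foldr Form.conj Form.tru) := by
  simp only [bodyOf, List.map_map]
  rfl

theorem sat_bodyOf_iff {n : B.N} {w : B.Assign n} {I : Set B.Atom} :
    Form.sat I (B.bodyOf n w) ↔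
      ∀ p : {x // x ∈ B.parents n}, (⟨p.1, w p⟩ : B.Atom) ∈ I := by
  rw [bodyOf_eq]
  exact (Form.sat_foldr_conj_atom _ _).trans <| List.forall_mem_map.trans
    ⟨fun h p => h p (by simp), fun h p _ => h p⟩

theorem val_bodyOf_eq_t {n : B.N} {w : B.Assign n} {ν : B.Atom → TV}
    (h : ∀ p : {x // x ∈ B.parents n}, ν ⟨p.1, w p⟩ = TV.t) :
    Form.val ν (B.bodyOf n w) = TV.t := by
  rw [bodyOf_eq]
  refine Form.val_foldr_conj_atom_eq_t fun a ha => ?_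
  obtain ⟨p, -, rfl⟩ := List.mem_map.mp ha
  exact h p

theorem psum_lawOf (n : B.N) (w : B.Assign n) : (B.lawOf ⟨n, w⟩).psum = 1 := by
  have hsupp : ∀ v ∈ Finset.univ, B.cpt n w v ≠ 0 → 0 < B.cpt n w v :=
    fun v _ hv => (B.cpt_nonneg n w v).lt_of_ne' hv
  simpa [CPLaw.psum, lawOf, headOf, List.map_map, Function.comp_def, Finset.sum_map_toList,
    Finset.sum_filter_of_ne hsupp] using B.cpt_sum n w

theorem lawOf_head (n : B.N) (w : B.Assign n) :
    (B.lawOf ⟨n, w⟩).head =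
      (B.support n w).toList.map fun v => ((⟨n, v⟩ : B.Atom), B.cpt n w v) :=
  rfl

theorem lawOf_head_get_idxOf {n : B.N} {w : B.Assign n} {v : B.dom n} (hv : 0 < B.cpt n w v) :
    ∃ h : (B.support n w).toList.idxOf v < (B.lawOf ⟨n, w⟩).head.length,
      (B.lawOf ⟨n, w⟩).head.get ⟨_, h⟩ = ((⟨n, v⟩ : B.Atom), B.cpt n w v) := by
  have hmem : v ∈ (B.support n w).toList := by simpa [support] using hv
  refine ⟨(List.idxOf_lt_length_iff.mpr hmem).trans_eq (List.length_map _).symm, ?_⟩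
  rw [List.get_eq_getElem]
  exact (List.getElem_map _).trans
    (congrArg (fun x => ((⟨n, x⟩ : B.Atom), B.cpt n w x)) (List.getElem_idxOf _))

theorem exists_idxOf_eq {n : B.N} {w : B.Assign n} {i : ℕ}
    (hi : i < (B.lawOf ⟨n, w⟩).head.length) :
    ∃ v, 0 < B.cpt n w v ∧ (B.support n w).toList.idxOf v = i := by
  replace hi : i < (B.support n w).toList.length := hi.trans_eq (List.length_map _)
  refine ⟨_, ?_, List.get_idxOf (Finset.nodup_toList _) ⟨i, hi⟩⟩
  exact (Finset.mem_filter.mp (Finset.mem_toList.mp (List.getElem_mem hi))).2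

end BN

namespace BProc

variable {B : BN} (W : BProc B)

def IsChild (c s : W.Node) : Prop := c ≠ W.root ∧ W.parent c = s

variable {W}

theorem depth_lt_of_transGen {c s : W.Node} (h : Relation.TransGen W.IsChild c s) :
    W.depth s < W.depth c := by
  induction h with
  | single h => have := W.depth_parent _ h.1; rw [h.2] at this; omega
  | tail _ h ih => have := W.depth_parent _ h.1; rw [h.2] at this; omega

theorem exists_isChild_of_transGen {c s : W.Node} (h : Relation.TransGen W.IsChild c s) :
    ∃ c', W.IsChild c' s :=
  let ⟨c', _, hc'⟩ := Relation.TransGen.tail'_iff.mp h; ⟨c', hc'⟩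

theorem exists_isLeaf_transGen {c s : W.Node} (hc : W.IsChild c s) :
    ∃ l, (∀ c', ¬ W.IsChild c' l) ∧ Relation.TransGen W.IsChild l s := by
  obtain ⟨l, hl, hmax⟩ := (Finset.univ.filter fun l => Relation.TransGen W.IsChild l s)
    |>.exists_max_image W.depth ⟨c, by simpa using Relation.TransGen.single hc⟩
  simp only [Finset.mem_filter, Finset.mem_univ, true_and] at hl hmax
  refine ⟨l, fun c' hc' => ?_, hl⟩
  have := hmax c' (hl.head hc')
  have := depth_lt_of_transGen (Relation.TransGen.single hc')
  omega

theorem nodemap_ne_of_transGen {c s s' : W.Node} (hc : W.IsChild c s)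
    (h : Relation.TransGen W.IsChild s s') : W.nodemap s' ≠ W.nodemap s := by
  obtain ⟨l, hleaf, hl⟩ := exists_isLeaf_transGen hc
  intro heq
  have : s' = s := (W.branch_bij l hleaf).injOn (hl.trans h) hl heq
  subst this
  exact (depth_lt_of_transGen h).false

variable (W) in
theorem parent_induction {P : W.Node → Prop} (root : P W.root)
    (step : ∀ c, c ≠ W.root → P (W.parent c) → P c) (c : W.Node) : P c := by
  induction hd : W.depth c using Nat.strong_induction_on generalizing c with
  | _ d ih =>
    by_cases hc : c = W.root
    · exact hc ▸ root
    · exact step c hc (ih _ (by have := W.depth_parent c hc; omega) _ rfl)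

theorem exists_interp_eq_insert {c s : W.Node} (hc : W.IsChild c s) :
    ∃ v, W.interp c = insert ⟨W.nodemap s, v⟩ (W.interp s) := by
  obtain ⟨w, -, -, g, -, hg, hsurj⟩ := W.children_spec s ⟨c, hc⟩
  obtain ⟨v, rfl⟩ := hsurj c hc
  exact ⟨v.1, (hg v).2.1⟩

theorem interp_subset_of_transGen {c s : W.Node} (h : Relation.TransGen W.IsChild c s) :
    W.interp s ⊆ W.interp c := by
  induction h with
  | single h => obtain ⟨v, hv⟩ := exists_interp_eq_insert h; exact hv ▸ Set.subset_insert _ _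
  | tail _ h ih =>
    obtain ⟨v, hv⟩ := exists_interp_eq_insert h; exact (hv ▸ Set.subset_insert _ _).trans ih

theorem exists_transGen_of_mem_interp {c : W.Node} {a : B.Atom} (ha : a ∈ W.interp c) :
    ∃ s, Relation.TransGen W.IsChild c s ∧ a.1 = W.nodemap s := by
  induction c using W.parent_induction with
  | root => simp [W.interp_root] at ha
  | step c hc ih =>
    obtain ⟨v, hv⟩ := exists_interp_eq_insert (W := W) ⟨hc, rfl⟩
    rw [hv] at ha
    rcases ha with rfl | ha
    · exact ⟨_, .single ⟨hc, rfl⟩, rfl⟩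
    · obtain ⟨s, hs, hfst⟩ := ih ha
      exact ⟨s, .head ⟨hc, rfl⟩ hs, hfst⟩

theorem injOn_fst_interp (c : W.Node) : Set.InjOn (Sigma.fst : B.Atom → B.N) (W.interp c) := by
  induction c using W.parent_induction with
  | root => exact W.interp_root ▸ Set.injOn_empty _
  | step c hc ih =>
    have hchild : W.IsChild c (W.parent c) := ⟨hc, rfl⟩
    have hfresh : ∀ a ∈ W.interp (W.parent c), a.1 ≠ W.nodemap (W.parent c) := by
      intro a ha
      obtain ⟨s, hs, hs'⟩ := exists_transGen_of_mem_interp ha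
      exact hs' ▸ nodemap_ne_of_transGen hchild hs
    obtain ⟨v, hv⟩ := exists_interp_eq_insert hchild
    rw [hv]
    exact (Set.injOn_insert fun ha => hfresh _ ha rfl).mpr
      ⟨ih, fun ⟨a, ha, h⟩ => hfresh a ha h⟩

theorem assignAt_spec {c s : W.Node} (hc : W.IsChild c s) :
    (∀ p : {x // x ∈ B.parents (W.nodemap s)},
        (⟨p.1, W.assignAt s p⟩ : B.Atom) ∈ W.interp s) ∧
    ∃ g : {v : B.dom (W.nodemap s) // 0 < B.cpt (W.nodemap s) (W.assignAt s) v} → W.Node,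
      (∀ v, W.IsChild (g v) s ∧
        W.interp (g v) = insert (⟨W.nodemap s, v.1⟩ : B.Atom) (W.interp s) ∧
        W.prob (g v) = B.cpt (W.nodemap s) (W.assignAt s) v.1) ∧
      (∀ c, W.IsChild c s → ∃ v, c = g v) := by
  have hs : ∃ c, c ≠ W.root ∧ W.parent c = s := ⟨c, hc⟩
  rw [assignAt, dif_pos hs]
  obtain ⟨hmem, -, g, -, hg⟩ := (W.children_spec s hs).choose_spec
  exact ⟨hmem, g, hg⟩

theorem assignAt_mem {c s : W.Node} (hc : W.IsChild c s)
    (p : {x // x ∈ B.parents (W.nodemap s)}) :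
    (⟨p.1, W.assignAt s p⟩ : B.Atom) ∈ W.interp s :=
  (assignAt_spec hc).1 p

variable (W)

def valueAt (c : W.Node) : B.dom (W.nodemap (W.parent c)) :=
  Classical.epsilon fun v => (⟨W.nodemap (W.parent c), v⟩ : B.Atom) ∈ W.interp c

def choiceIdx (c : W.Node) : Option ℕ :=
  if c = W.root then none
  else some ((B.support (W.nodemap (W.parent c)) (W.assignAt (W.parent c))).toList.idxOf
    (W.valueAt c))

def toProc (ch : W.Node → Option ℕ) : Proc B.Atom B.Idx where
  Node := W.Node
  root := W.root
  parent := W.parent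
  depth := W.depth
  interp := W.interp
  prob := W.prob
  pathProb := W.pathProb
  rule s := ⟨W.nodemap s, W.assignAt s⟩
  choice := ch
  depth_root := W.depth_root
  depth_parent := W.depth_parent
  pathProb_root := W.pathProb_root
  pathProb_parent := W.pathProb_parent

variable {W}

theorem choiceIdx_eq {c s : W.Node} (hc : W.IsChild c s) {v : B.dom (W.nodemap s)}
    (hv : (⟨W.nodemap s, v⟩ : B.Atom) ∈ W.interp c) :
    W.choiceIdx c = some ((B.support (W.nodemap s) (W.assignAt s)).toList.idxOf v) := by
  obtain ⟨hne, rfl⟩ := hc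
  have hval := injOn_fst_interp c (Classical.epsilon_spec
    (p := fun v => (⟨W.nodemap (W.parent c), v⟩ : B.Atom) ∈ W.interp c) ⟨v, hv⟩) hv rfl
  rw [choiceIdx, if_neg hne, valueAt, sigma_mk_injective hval]

theorem exists_isChild_of_not_isLeaf {ch : W.Node → Option ℕ} {s : W.Node}
    (hs : ¬ (W.toProc ch).isLeaf s) : ∃ c, W.IsChild c s :=
  not_forall_not.mp hs

theorem rule_mem_RE {ch : W.Node → Option ℕ} {c s : W.Node} (hc : W.IsChild c s) :
    (W.toProc ch).rule s ∈ RE (W.toProc ch) s :=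
  fun _ hs' heq => nodemap_ne_of_transGen hc hs' (congrArg Sigma.fst heq)

theorem not_sat_body_of_isLeaf {ch : W.Node → Option ℕ} {l : W.Node}
    (hl : ∀ c, ¬ W.IsChild c l) {r : B.Idx} (hr : r ∈ RE (W.toProc ch) l) :
    ¬ Form.sat (W.interp l) (B.lawOf r).body := by
  obtain ⟨n, w⟩ := r
  intro hsat
  obtain ⟨s, hls, rfl⟩ := (W.branch_bij l hl).surjOn (Set.mem_univ n)
  obtain ⟨c, hc⟩ := exists_isChild_of_transGen hls
  have hw : w = W.assignAt s := funext fun p =>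
    sigma_mk_injective <| injOn_fst_interp l (BN.sat_bodyOf_iff.mp hsat p)
      (interp_subset_of_transGen hls (assignAt_mem hc p)) rfl
  exact hr s hls (by rw [hw]; rfl)

theorem firesAt_toProc {c s : W.Node} (hc : W.IsChild c s) :
    FiresAt B.lawOf (W.toProc W.choiceIdx) s := by
  obtain ⟨g, hg, hgsurj⟩ := (assignAt_spec hc).2
  have hchoice : ∀ v, W.choiceIdx (g v) =
      some ((B.support (W.nodemap s) (W.assignAt s)).toList.idxOf v.1) := fun v =>
    choiceIdx_eq (hg v).1 ((hg v).2.1 ▸ Set.mem_insert _ _)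
  refine ⟨fun s' hs' => ?_, fun s₁ s₂ h₁ h₂ h => ?_, fun i hi => ?_, fun hlt => ?_⟩
  · obtain ⟨v, rfl⟩ := hgsurj s' hs'
    refine ⟨fun i hi => ?_, fun hnone => ?_⟩
    · obtain rfl := Option.some.inj ((hchoice v).symm.trans hi)
      obtain ⟨h, hget⟩ := BN.lawOf_head_get_idxOf v.2
      exact ⟨h, (hg v).2.1.trans (congrArg (insert · _) (congrArg Prod.fst hget).symm),
        (hg v).2.2.trans (congrArg Prod.snd hget).symm⟩
    · exact absurd ((hchoice v).symm.trans hnone) (Option.some_ne_none _)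
  · obtain ⟨v₁, rfl⟩ := hgsurj s₁ h₁
    obtain ⟨v₂, rfl⟩ := hgsurj s₂ h₂
    have hidx := Option.some.inj ((hchoice v₁).symm.trans (h.trans (hchoice v₂)))
    have hmem : v₁.1 ∈ (B.support (W.nodemap s) (W.assignAt s)).toList := by
      simpa [BN.support] using v₁.2
    exact congrArg g (Subtype.ext ((List.idxOf_inj hmem).mp hidx))
  · obtain ⟨v, hv, rfl⟩ := BN.exists_idxOf_eq hi
    exact ⟨g ⟨v, hv⟩, (hg _).1, hchoice _⟩
  · exact absurd (BN.psum_lawOf _ _ ▸ hlt) (lt_irrefl 1)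

theorem isWEM_toProc : IsWEM B.lawOf (W.toProc W.choiceIdx) := by
  refine ⟨W.interp_root, W.prob_mem, fun s hs => ?_, fun s hs => ?_,
    fun l hl _ hr => not_sat_body_of_isLeaf hl hr⟩
  · rw [← W.prob_sum s (exists_isChild_of_not_isLeaf hs)]
    exact Finset.sum_congr (Finset.filter_congr fun _ _ => Iff.rfl) fun _ _ => rfl
  · obtain ⟨c, hc⟩ := exists_isChild_of_not_isLeaf hs
    exact ⟨rule_mem_RE hc, BN.sat_bodyOf_iff.mpr (assignAt_mem hc), firesAt_toProc hc⟩

end BProc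

/-- Bayesian networks embed into CP-logic: for every `B`-process, the underlying
probabilistic process, with the map `E` sending each non-leaf node `s` to the CP-law
of `CP_B` determined by the network node `nodemap s` and the unique parent assignment
recorded in `I(s)` (and a suitable labelling of the children of each node by the head
elements they realize), is an execution model of the CP-theory `CP_B`. -/
theorem bn_process_is_execution_model (B : BN) (W : BProc B) :
    ∃ ch : W.Node → Option ℕ,
      IsExec B.lawOf
        { Node := W.Node
          root := W.root
          parent := W.parent
          depth := W.depth
          interp := W.interp
          prob := W.prob
          pathProb := W.pathProb
          rule := fun s => (⟨W.nodemap s, W.assignAt s⟩ : B.Idx)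
          choice := ch
          depth_root := W.depth_root
          depth_parent := W.depth_parent
          pathProb_root := W.pathProb_root
          pathProb_parent := W.pathProb_parent } := by
  refine ⟨W.choiceIdx, W.isWEM_toProc, fun s hs ν n hν _ => ?_⟩
  obtain ⟨c, hc⟩ := BProc.exists_isChild_of_not_isLeaf hs
  have hbody : Form.val (ν n) (B.bodyOf (W.nodemap s) (W.assignAt s)) = TV.t :=
    BN.val_bodyOf_eq_t fun p => hν.apply_eq_t (BProc.assignAt_mem hc p) n le_rfl
  exact hbody ▸ TV.noConfusion

end CP
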